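/- arXiv:2412.13369 — 3 statements merged into one kernel-verified Lean document; each statement's English description precedes it below -/
import Mathlib

section
/- Let n_0, …, n_{ℓ-1} and T be positive integers. There exists a subset S ⊆ {0,…,ℓ-1} with ∑_{i∈S} n_i = T if and only if in the graph D_ℓ there exists a path s_0, y_0, s_1, y_1, …, y_{ℓ-1} with each y_i ∈ {t_i, u_i} whose total accumulated payoff is 0, where Pay(s_0) = −T, Pay(s_i) = 0 for 1 ≤ i < ℓ, Pay(u_i) = n_i, and Pay(t_i) = 0. -/
inductive Vtx where
  | s : ℕ → Vtx
  | t : ℕ → Vtx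
  | u : ℕ → Vtx
  deriving DecidableEq

/-- The edge relation of the graph `D_ℓ`. -/
def Edge (ℓ : ℕ) : Vtx → Vtx → Prop := fun a b =>
  ∃ i, i < ℓ ∧
    ((a = .s i ∧ b = .t i) ∨ (a = .s i ∧ b = .u i) ∨
     (a = .t i ∧ b = .s ((i+1) % ℓ)) ∨ (a = .u i ∧ b = .s ((i+1) % ℓ)))

/-- The payoff function of the Subset Sum reduction. -/
def PaySS (n : ℕ → ℕ) (T : ℕ) : Vtx → ℤ
  | .s i => if i = 0 then -(T : ℤ) else 0
  | .u i => (n i : ℤ)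
  | .t _ => 0

lemma sum_split (ℓ : ℕ) (hℓ : 1 ≤ ℓ) (n : ℕ → ℕ) (T : ℕ) (y : ℕ → Bool) :
    ∑ i ∈ Finset.range ℓ,
        (PaySS n T (.s i) + PaySS n T (if y i then .u i else .t i)) =
      -(T : ℤ) + ∑ i ∈ Finset.range ℓ, (if y i then (n i : ℤ) else 0) := by
  rw [Finset.sum_add_distrib]
  congr 1
  · have : ∀ i ∈ Finset.range ℓ, PaySS n T (.s i) =
        if i = 0 then -(T : ℤ) else 0 := by
      intro i _; rfl
    rw [Finset.sum_congr rfl this, Finset.sum_ite_eq' (Finset.range ℓ) 0 (fun _ => -(T:ℤ))]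
    simp only [Finset.mem_range]
    omega
  · apply Finset.sum_congr rfl
    intro i _
    by_cases h : y i <;> simp [h, PaySS]

theorem stmt1 (ℓ : ℕ) (hℓ : 1 ≤ ℓ) (n : ℕ → ℕ) (hn : ∀ i < ℓ, 0 < n i)
    (T : ℕ) (hT : 0 < T) :
    (∃ S : Finset ℕ, S ⊆ Finset.range ℓ ∧ ∑ i ∈ S, n i = T) ↔
    (∃ y : ℕ → Bool,
      ∑ i ∈ Finset.range ℓ,
        (PaySS n T (.s i) + PaySS n T (if y i then .u i else .t i)) = 0) := by
  constructor
  · rintro ⟨S, hS, hsum⟩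
    refine ⟨fun i => decide (i ∈ S), ?_⟩
    rw [sum_split ℓ hℓ n T]
    have : ∑ i ∈ Finset.range ℓ, (if decide (i ∈ S) then (n i : ℤ) else 0) =
        ∑ i ∈ S, (n i : ℤ) := by
      simp only [decide_eq_true_eq]
      rw [Finset.sum_ite_mem]
      congr 1
      rw [Finset.inter_eq_right.mpr hS]
    rw [this]
    have hz : (∑ i ∈ S, (n i : ℤ)) = (T : ℤ) := by exact_mod_cast hsum
    rw [hz]; ring
  · rintro ⟨y, hy⟩
    refine ⟨(Finset.range ℓ).filter (fun i => y i = true), Finset.filter_subset _ _, ?_⟩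
    rw [sum_split ℓ hℓ n T] at hy
    have h2 : ∑ i ∈ Finset.range ℓ, (if y i then (n i : ℤ) else 0) = (T : ℤ) := by
      linarith
    have : ((∑ i ∈ (Finset.range ℓ).filter (fun i => y i = true), n i : ℕ) : ℤ) = (T : ℤ) := by
      push_cast
      rw [Finset.sum_filter]
      simpa using h2
    exact_mod_cast this
end

section
/- Let (v_0,w_0),…,(v_{ℓ-1},w_{ℓ-1}) be pairs of positive integers and V, W positive integers with ∑_i w_i > W. Define w_max = max_i w_i, d = 2ℓ, c_1 = V/d, c_2 = w_max − W/d. Then there exists a subset S ⊆ {0,…,ℓ-1} with ∑_{i∈S} v_i ≥ V and ∑_{i∈S} w_i ≤ W if and only if there exists a choice y_i ∈ {t_i, u_i} for each i such that the path s_0,y_0,…,s_{ℓ-1},y_{ℓ-1} satisfies (total Pay_1)/d ≥ c_1 and (total Pay_2)/d ≥ c_2, where Pay_1(s_i)=Pay_1(t_i)=0, Pay_1(u_i)=v_i, Pay_2(s_i)=Pay_2(t_i)=w_max, Pay_2(u_i)=w_max−w_i. -/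
theorem stmt2 (ℓ : ℕ) (hℓ : 1 ≤ ℓ) (v w : ℕ → ℕ)
    (hv : ∀ i < ℓ, 0 < v i) (hw : ∀ i < ℓ, 0 < w i)
    (V W : ℕ) (hV : 0 < V) (hW : 0 < W)
    (hsum : W < ∑ i ∈ Finset.range ℓ, w i)
    (wmax : ℕ) (hwmax : wmax = (Finset.range ℓ).sup w)
    (d : ℕ) (hd : d = 2*ℓ)
    (c1 c2 : ℚ) (hc1 : c1 = (V : ℚ) / d) (hc2 : c2 = (wmax : ℚ) - (W : ℚ) / d) :
    (∃ S : Finset ℕ, S ⊆ Finset.range ℓ ∧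
        V ≤ ∑ i ∈ S, v i ∧ ∑ i ∈ S, w i ≤ W) ↔
    (∃ y : ℕ → Bool,
      (∑ i ∈ Finset.range ℓ, (if y i then (v i : ℚ) else 0)) / d ≥ c1 ∧
      (∑ i ∈ Finset.range ℓ,
        ((wmax : ℚ) + (if y i then (wmax : ℚ) - (w i : ℚ) else (wmax : ℚ)))) / d ≥ c2) := by
  have hdpos : 0 < d := by omega
  have hd0 : (0:ℚ) < (d:ℚ) := by exact_mod_cast hdpos
  have hdne : (d:ℚ) ≠ 0 := ne_of_gt hd0
  have key2 : ∀ y : ℕ → Bool,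
      (∑ i ∈ Finset.range ℓ,
        ((wmax : ℚ) + (if y i then (wmax : ℚ) - (w i : ℚ) else (wmax : ℚ))))
      = (d : ℚ) * wmax - ∑ i ∈ Finset.range ℓ, (if y i then (w i : ℚ) else 0) := by
    intro y
    have h : ∀ i ∈ Finset.range ℓ, (wmax:ℚ) + (if y i then (wmax:ℚ) - w i else wmax)
        = 2*wmax - (if y i then (w i:ℚ) else 0) := by
      intro i _; cases y i <;> simp <;> ring
    rw [Finset.sum_congr rfl h, Finset.sum_sub_distrib, Finset.sum_const,
      Finset.card_range, hd]
    push_cast; ring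
  constructor
  · rintro ⟨S, hS, hV', hW'⟩
    refine ⟨fun i => decide (i ∈ S), ?_, ?_⟩
    · have h1 : (∑ i ∈ Finset.range ℓ, (if decide (i ∈ S) then (v i:ℚ) else 0))
          = ((∑ i ∈ S, v i : ℕ) : ℚ) := by
        simp only [decide_eq_true_eq]
        rw [Finset.sum_ite_mem, Finset.inter_eq_right.mpr hS]
        push_cast; rfl
      rw [ge_iff_le, hc1, div_le_div_iff_of_pos_right hd0, h1]
      exact_mod_cast hV'
    · have hTw : (∑ i ∈ Finset.range ℓ, (if decide (i ∈ S) then (w i:ℚ) else 0))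
          ≤ (W:ℚ) := by
        simp only [decide_eq_true_eq]
        rw [Finset.sum_ite_mem, Finset.inter_eq_right.mpr hS]
        exact_mod_cast hW'
      rw [ge_iff_le, hc2, key2, sub_div, mul_div_cancel_left₀ _ hdne]
      have : (∑ i ∈ Finset.range ℓ, (if decide (i ∈ S) then (w i:ℚ) else 0)) / d
          ≤ (W:ℚ)/d := by gcongr
      linarith
  · rintro ⟨y, h1, h2⟩
    refine ⟨(Finset.range ℓ).filter (fun i => y i = true), Finset.filter_subset _ _, ?_, ?_⟩
    · rw [hc1, ge_iff_le, div_le_div_iff_of_pos_right hd0] at h1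
      have : ((∑ i ∈ (Finset.range ℓ).filter (fun i => y i = true), v i : ℕ) : ℚ)
          = ∑ i ∈ Finset.range ℓ, (if y i then (v i:ℚ) else 0) := by
        push_cast
        rw [Finset.sum_filter]
      rw [← this] at h1
      exact_mod_cast h1
    · rw [key2, hc2, ge_iff_le, sub_div, mul_div_cancel_left₀ _ hdne] at h2
      have h3 : (∑ i ∈ Finset.range ℓ, (if y i then (w i:ℚ) else 0)) / d ≤ (W:ℚ)/d := by
        linarith
      rw [div_le_div_iff_of_pos_right hd0] at h3
      have : ((∑ i ∈ (Finset.range ℓ).filter (fun i => y i = true), w i : ℕ) : ℚ)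
          = ∑ i ∈ Finset.range ℓ, (if y i then (w i:ℚ) else 0) := by
        push_cast
        rw [Finset.sum_filter]
      rw [← this] at h3
      exact_mod_cast h3
end

section
/- Let φ = C_1 ∧ ⋯ ∧ C_k be a CNF formula over variables x_0,…,x_{ℓ-1}. Define payoff functions Pay_j on D_ℓ by Pay_j(s_i)=0, Pay_j(u_i)=1 if x_i occurs (positively) in C_j and 0 otherwise, Pay_j(t_i)=1 if ¬x_i occurs in C_j and 0 otherwise. Then φ is satisfiable if and only if there exists a choice y_i ∈ {t_i, u_i} for each 0 ≤ i < ℓ such that for every j, the total accumulated Pay_j along the path s_0,y_0,s_1,y_1,…,y_{ℓ-1} is strictly positive. -/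
theorem stmt4 (ℓ k : ℕ) (pos neg : ℕ → Finset ℕ)
    (hpos : ∀ j < k, pos j ⊆ Finset.range ℓ)
    (hneg : ∀ j < k, neg j ⊆ Finset.range ℓ) :
    (∃ ν : ℕ → Bool, ∀ j < k,
        ∃ i, (i ∈ pos j ∧ ν i = true) ∨ (i ∈ neg j ∧ ν i = false)) ↔
    (∃ y : ℕ → Bool, ∀ j < k,
      0 < ∑ i ∈ Finset.range ℓ,
        (if y i then (if i ∈ pos j then (1 : ℤ) else 0)
         else (if i ∈ neg j then (1 : ℤ) else 0))) := by
  constructor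
  · rintro ⟨ν, hν⟩
    refine ⟨ν, fun j hj => ?_⟩
    obtain ⟨i, hi⟩ := hν j hj
    have hiℓ : i ∈ Finset.range ℓ := by
      rcases hi with ⟨h1, _⟩ | ⟨h1, _⟩
      · exact hpos j hj h1
      · exact hneg j hj h1
    refine Finset.sum_pos' (fun m _ => ?_) ⟨i, hiℓ, ?_⟩
    · split <;> split <;> norm_num
    · rcases hi with ⟨h1, h2⟩ | ⟨h1, h2⟩ <;> simp [h1, h2]
  · rintro ⟨y, hy⟩
    refine ⟨y, fun j hj => ?_⟩
    by_contra hc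
    push_neg at hc
    have := hy j hj
    have hz : ∑ i ∈ Finset.range ℓ,
        (if y i then (if i ∈ pos j then (1 : ℤ) else 0)
         else (if i ∈ neg j then (1 : ℤ) else 0)) = 0 := by
      refine Finset.sum_eq_zero fun i _ => ?_
      have h := hc i
      cases hyi : y i with
      | true =>
        simp only [if_pos rfl] at *
        have : i ∉ pos j := fun hp => by
          rcases h with h
          simp [hp, hyi] at h
        simp [hyi, this]
      | false =>
        have : i ∉ neg j := fun hp => by simp [hp, hyi] at h
        simp [hyi, this]
    omega
end
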